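/- arXiv:1601.06119 — 3 statements merged into one kernel-verified Lean document; each statement's English description precedes it below -/
import Mathlib

section
/- Let x be a coordinate with |x| < L and x' a padded coordinate of x. Then for every coordinate c with c ≠ x and cpl(x', c) ≤ |x|: δ_TD(x', c) > δ_TD(x', x) = L − |x|, and δ_CPL(x', c) > δ_CPL(x', x). Hence x is the unique minimizer of both δ_TD(x', ·) and δ_CPL(x', ·) over any set of coordinates c satisfying cpl(x', c) ≤ |x|; i.e., the receiver's coordinate is the unique closest coordinate to its padded coordinate. -/
/-!
Since `x` is a prefix of `x'`, `cpl x' x = |x|`. For `c ≠ x`, the bounds `cpl x' c ≤ |x|` and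
`cpl x' c ≤ |c|` cannot both be equalities, since then `c` would be the prefix of `x'` of length
`|x|`, namely `x`. So either `c` shares a strictly shorter prefix with `x'`, which costs a whole
unit in both distances, or `c` is strictly longer than `x`, which raises `δ_TD` and shrinks the
correction term `1 / (|x'| + |c| + 1)` of `δ_CPL`.
-/

/-- The common prefix length of two lists. -/
def cpl {α : Type*} [DecidableEq α] : List α → List α → ℕ
  | a :: as, b :: bs => if a = b then cpl as bs + 1 else 0
  | _, _ => 0

/-- The tree distance `δ_TD x y = |x| + |y| - 2 · cpl x y`. -/
def deltaTD {α : Type*} [DecidableEq α] (x y : List α) : ℤ :=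
  (x.length : ℤ) + y.length - 2 * cpl x y

/-- The common-prefix-length based distance. -/
def deltaCPL {α : Type*} [DecidableEq α] (L : ℕ) (x y : List α) : ℚ :=
  if x = y then 0
  else (L : ℚ) - cpl x y - 1 / ((x.length : ℚ) + y.length + 1)

section

variable {α : Type*} [DecidableEq α]

theorem cpl_le_length_right : ∀ a b : List α, cpl a b ≤ b.length
  | a :: as, b :: bs => by
      by_cases h : a = b
      · simpa [cpl, h] using cpl_le_length_right as bs
      · simp [cpl, h]
  | [], b => by cases b <;> simp [cpl]
  | _ :: _, [] => by simp [cpl]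

theorem cpl_eq_length_right_iff : ∀ {a b : List α}, cpl a b = b.length ↔ b <+: a
  | a, [] => by cases a <;> simp [cpl]
  | [], _ :: _ => by simp [cpl]
  | a :: as, b :: bs => by
      by_cases hab : a = b
      · subst hab
        simp [cpl, cpl_eq_length_right_iff]
      · simp [cpl, hab, Ne.symm hab]

theorem cpl_self (a : List α) : cpl a a = a.length :=
  cpl_eq_length_right_iff.2 (List.prefix_refl a)

theorem cpl_lt_length_or_length_lt_of_prefix {x x' c : List α} (hpre : x <+: x') (hne : c ≠ x)
    (hcpl : cpl x' c ≤ x.length) :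
    cpl x' c < x.length ∨ cpl x' c = x.length ∧ x.length < c.length := by
  have hc := cpl_le_length_right x' c
  by_contra! h
  have hcx : cpl x' c = x.length := by omega
  have hcpre : c <+: x' := cpl_eq_length_right_iff.1 (by omega)
  exact hne ((List.prefix_of_prefix_length_le hcpre hpre (by omega)).eq_of_length (by omega))

theorem deltaTD_of_prefix {x y : List α} (h : y <+: x) :
    deltaTD x y = (x.length : ℤ) - y.length := by
  rw [deltaTD, cpl_eq_length_right_iff.2 h]
  ring

theorem deltaCPL_of_ne (L : ℕ) {x y : List α} (h : x ≠ y) :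
    deltaCPL L x y = (L : ℚ) - cpl x y - 1 / ((x.length : ℚ) + y.length + 1) :=
  if_neg h

theorem deltaCPL_lt_deltaCPL (L : ℕ) {x y z : List α} (hy : x ≠ y) (hz : x ≠ z)
    (h : cpl x z < cpl x y ∨ cpl x z = cpl x y ∧ y.length < z.length) :
    deltaCPL L x y < deltaCPL L x z := by
  rw [deltaCPL_of_ne L hy, deltaCPL_of_ne L hz]
  have hdy : (0 : ℚ) < x.length + y.length + 1 := by positivity
  have hdz : (1 : ℚ) ≤ x.length + z.length + 1 := by
    have : (0 : ℚ) ≤ x.length + z.length := by positivity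
    linarith
  rcases h with hlt | ⟨heq, hlen⟩
  · have hcpl : (cpl x z : ℚ) + 1 ≤ cpl x y := by exact_mod_cast hlt
    have hz_le : 1 / ((x.length : ℚ) + z.length + 1) ≤ 1 := (div_le_one₀ (by linarith)).2 hdz
    have hy_pos : 0 < 1 / ((x.length : ℚ) + y.length + 1) := by positivity
    linarith
  · have hlen' : (y.length : ℚ) < z.length := by exact_mod_cast hlen
    have : 1 / ((x.length : ℚ) + z.length + 1) < 1 / ((x.length : ℚ) + y.length + 1) :=
      one_div_lt_one_div_of_lt hdy (by linarith)
    rw [heq]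
    linarith

end

/-- Let `x` be a coordinate with `|x| < L` and `x'` a padded coordinate of `x`
(a list of length `L` with `x` as a prefix). Then for every coordinate `c ≠ x`
with `cpl x' c ≤ |x|`: `δ_TD x' x = L - |x|`, `δ_TD x' c > δ_TD x' x`, and
`δ_CPL x' c > δ_CPL x' x`; i.e., `x` is the unique closest coordinate to the
padded coordinate `x'` for both distances. -/
theorem padded_unique_closest {α : Type*} [DecidableEq α] (L : ℕ) (x x' : List α)
    (hlen : x.length < L) (hpre : x <+: x') (hplen : x'.length = L)
    (c : List α) (hne : c ≠ x) (hcpl : cpl x' c ≤ x.length) :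
    deltaTD x' x = (L : ℤ) - x.length ∧
    deltaTD x' x < deltaTD x' c ∧
    deltaCPL L x' x < deltaCPL L x' c := by
  have hTD : deltaTD x' x = (L : ℤ) - x.length := by rw [deltaTD_of_prefix hpre, hplen]
  have hcases := cpl_lt_length_or_length_lt_of_prefix hpre hne hcpl
  have hx'x : x' ≠ x := by
    rintro rfl
    omega
  have hx'c : x' ≠ c := by
    rintro rfl
    rw [cpl_self] at hcpl
    omega
  refine ⟨hTD, ?_, deltaCPL_lt_deltaCPL L hx'x hx'c ?_⟩
  · have := cpl_le_length_right x' c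
    rw [hTD, deltaTD, hplen]
    omega
  · rwa [cpl_eq_length_right_iff.2 hpre]
end

section
/- Let h : BitVec b → BitVec b be injective, k̃ : BitVec b, x a coordinate with |x| < L, x' a padded coordinate of x, and y = hc(k̃, x') the return address generated from x. Then for every coordinate c with cpl(x', c) ≤ |x|, the diversity measure satisfies δ_TD(y, hc(k̃, c)) = δ_TD(x, c) + (L − |x|). Consequently, for every finite nonempty set C of coordinates each satisfying cpl(x', c) ≤ |x|, the set of minimizers of c ↦ δ_TD(y, hc(k̃, c)) over C equals the set of minimizers of c ↦ δ_TD(x, c) over C; i.e., the return address is route preserving with respect to the tree distance δ_TD. -/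
/-- The hash cascade. -/
def hc {b : ℕ} (h : BitVec b → BitVec b) : BitVec b → List (BitVec b) → List (BitVec b)
  | _, [] => []
  | k, a :: as => h (k ^^^ a) :: hc h (h (k ^^^ a)) as

section CommonPrefix

variable {α : Type*} [DecidableEq α]

theorem cpl_eq_min_cpl_append (x t c : List α) :
    cpl x c = min (cpl (x ++ t) c) x.length := by
  induction x generalizing c with
  | nil => simp [cpl]
  | cons a as ih =>
    cases c with
    | nil => simp [cpl]
    | cons d ds =>
      by_cases had : a = d
      · simp [cpl, had, ih ds]
      · simp [cpl, had]

theorem deltaTD_append_of_cpl_le {x t c : List α} (hcpl : cpl (x ++ t) c ≤ x.length) :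
    deltaTD (x ++ t) c = deltaTD x c + t.length := by
  rw [deltaTD, deltaTD, cpl_eq_min_cpl_append x t c, min_eq_left hcpl, List.length_append]
  push_cast
  ring

end CommonPrefix

section HashCascade

variable {b : ℕ} (h : BitVec b → BitVec b)

@[simp]
theorem length_hc (k : BitVec b) (x : List (BitVec b)) : (hc h k x).length = x.length := by
  induction x generalizing k with
  | nil => rfl
  | cons a as ih => simp [hc, ih]

variable {h}

theorem cpl_hc (hinj : Function.Injective h) (k : BitVec b) (x y : List (BitVec b)) :
    cpl (hc h k x) (hc h k y) = cpl x y := by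
  induction x generalizing k y with
  | nil => cases y <;> rfl
  | cons a as ih =>
    cases y with
    | nil => rfl
    | cons c cs =>
      by_cases hac : a = c
      · subst hac
        simp [hc, cpl, ih]
      · have hne : h (k ^^^ a) ≠ h (k ^^^ c) :=
          hinj.ne fun he => hac ((BitVec.xor_right_inj k).mp he)
        simp [hc, cpl, hac, hne]

theorem deltaTD_hc (hinj : Function.Injective h) (k : BitVec b) (x y : List (BitVec b)) :
    deltaTD (hc h k x) (hc h k y) = deltaTD x y := by
  simp [deltaTD, cpl_hc hinj]

end HashCascade

theorem sep_forall_le_eq_of_eq_add_const {ι β : Type*} [AddCommMonoid β] [PartialOrder β]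
    [IsOrderedCancelAddMonoid β] {S : Set ι} {f g : ι → β} {a : β}
    (hfg : ∀ i ∈ S, f i = g i + a) :
    {i ∈ S | ∀ j ∈ S, f i ≤ f j} = {i ∈ S | ∀ j ∈ S, g i ≤ g j} := by
  ext i
  simp only [Set.mem_ofPred_eq, and_congr_right_iff]
  intro hi
  refine forall₂_congr fun j hj => ?_
  rw [hfg i hi, hfg j hj, add_le_add_iff_right]

theorem return_address_route_preserving_TD_general {b L : ℕ}
    (h : BitVec b → BitVec b) (hinj : Function.Injective h) (k : BitVec b)
    (x x' : List (BitVec b)) (hpre : x <+: x')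
    (hplen : x'.length = L) :
    (∀ c : List (BitVec b), cpl x' c ≤ x.length →
      deltaTD (hc h k x') (hc h k c) = deltaTD x c + ((L : ℤ) - x.length)) ∧
    (∀ C : Finset (List (BitVec b)), C.Nonempty →
      (∀ c ∈ C, cpl x' c ≤ x.length) →
      {c ∈ (C : Set (List (BitVec b))) |
          ∀ c' ∈ C, deltaTD (hc h k x') (hc h k c) ≤ deltaTD (hc h k x') (hc h k c')} =
      {c ∈ (C : Set (List (BitVec b))) | ∀ c' ∈ C, deltaTD x c ≤ deltaTD x c'}) := by
  obtain ⟨t, rfl⟩ := hpre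
  have hpad : ((L : ℤ) - x.length) = t.length := by
    rw [← hplen, List.length_append]
    push_cast
    ring
  have key : ∀ c, cpl (x ++ t) c ≤ x.length →
      deltaTD (hc h k (x ++ t)) (hc h k c) = deltaTD x c + ((L : ℤ) - x.length) := by
    intro c hcpl
    rw [deltaTD_hc hinj, deltaTD_append_of_cpl_le hcpl, hpad]
  exact ⟨key, fun C _ hC => sep_forall_le_eq_of_eq_add_const fun c hcC => key c (hC c hcC)⟩

/-- For an injective `h`, a coordinate `x` with `|x| < L`, a padded coordinate `x'` of `x`,
and the return address `y = hc k̃ x'`: for every coordinate `c` with `cpl x' c ≤ |x|` the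
diversity measure satisfies `δ_TD(y, hc k̃ c) = δ_TD(x, c) + (L - |x|)`; consequently,
over any finite nonempty set `C` of such coordinates, the minimizers of
`c ↦ δ_TD(y, hc k̃ c)` are exactly the minimizers of `c ↦ δ_TD(x, c)`:
the return address is route preserving with respect to `δ_TD`. -/
theorem return_address_route_preserving_TD {b L : ℕ}
    (h : BitVec b → BitVec b) (hinj : Function.Injective h) (k : BitVec b)
    (x x' : List (BitVec b)) (hlen : x.length < L) (hpre : x <+: x')
    (hplen : x'.length = L) :
    (∀ c : List (BitVec b), cpl x' c ≤ x.length →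
      deltaTD (hc h k x') (hc h k c) = deltaTD x c + ((L : ℤ) - x.length)) ∧
    (∀ C : Finset (List (BitVec b)), C.Nonempty →
      (∀ c ∈ C, cpl x' c ≤ x.length) →
      {c ∈ (C : Set (List (BitVec b))) |
          ∀ c' ∈ C, deltaTD (hc h k x') (hc h k c) ≤ deltaTD (hc h k x') (hc h k c')} =
      {c ∈ (C : Set (List (BitVec b))) | ∀ c' ∈ C, deltaTD x c ≤ deltaTD x c'}) :=
  return_address_route_preserving_TD_general h hinj k x x' hpre hplen
end

section
/- Let S be a finite set of coordinates that is prefix-closed (every prefix of a member of S belongs to S), and let x, e ∈ S. Then there exists a sequence x = v_0, v_1, …, v_k = e of elements of S such that for each i, either v_{i+1} = dropLast(v_i) or v_i = dropLast(v_{i+1}) (consecutive coordinates are related as parent and child in the prefix tree), δ_TD(v_{i+1}, e) < δ_TD(v_i, e) for all i, and k = δ_TD(x, e). In particular, greedy routing along tree edges reaches e from x in exactly δ_TD(x, e) hops, and δ_TD(x, e) equals the length of the tree route between x and e. -/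
lemma List.dropLast_take_of_le {α : Type*} {l : List α} {n : ℕ} (h : n ≤ l.length) :
    (l.take n).dropLast = l.take (n - 1) := by
  rw [List.dropLast_eq_take, List.length_take, List.take_take, min_eq_left h,
    min_eq_left (by omega)]

section TreeRoute

variable {α : Type*} [DecidableEq α]

@[simp]
lemma cpl_nil_left (y : List α) : cpl [] y = 0 := by
  cases y <;> rfl

@[simp]
lemma cpl_nil_right (x : List α) : cpl x [] = 0 := by
  cases x <;> rfl

@[simp]
lemma cpl_cons_cons (a b : α) (x y : List α) :
    cpl (a :: x) (b :: y) = if a = b then cpl x y + 1 else 0 := rfl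

@[simp]
lemma cpl_self_s14 : ∀ x : List α, cpl x x = x.length
  | [] => rfl
  | a :: x => by simp [cpl_self_s14 x]

lemma cpl_le_length_left : ∀ x y : List α, cpl x y ≤ x.length
  | [], _ | _ :: _, [] => by simp
  | a :: x, b :: y => by
    have := cpl_le_length_left x y
    simp only [cpl_cons_cons, List.length_cons]
    split <;> omega

lemma cpl_le_length_right_s14 : ∀ x y : List α, cpl x y ≤ y.length
  | [], _ | _ :: _, [] => by simp
  | a :: x, b :: y => by
    have := cpl_le_length_right_s14 x y
    simp only [cpl_cons_cons, List.length_cons]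
    split <;> omega

lemma take_cpl_eq : ∀ x y : List α, x.take (cpl x y) = y.take (cpl x y)
  | [], _ | _ :: _, [] => by simp
  | a :: x, b :: y => by
    by_cases hab : a = b
    · simp [hab, take_cpl_eq x y]
    · simp [hab]

lemma cpl_take_left : ∀ (n : ℕ) (x y : List α), cpl (x.take n) y = min n (cpl x y)
  | 0, _, _ | _ + 1, [], _ | _ + 1, _ :: _, [] => by simp
  | n + 1, a :: x, b :: y => by
    by_cases hab : a = b
    · simp [hab, cpl_take_left n x y]
    · simp [hab]

lemma deltaTD_take_of_cpl_le {x e : List α} {n : ℕ} (hm : cpl x e ≤ n) (hn : n ≤ x.length) :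
    deltaTD (x.take n) e = n + e.length - 2 * cpl x e := by
  rw [deltaTD, cpl_take_left, min_eq_right hm, List.length_take, min_eq_left hn]

lemma deltaTD_take_self {e : List α} {n : ℕ} (hn : n ≤ e.length) :
    deltaTD (e.take n) e = e.length - n := by
  rw [deltaTD, cpl_take_left, cpl_self_s14, List.length_take, min_eq_left hn]
  ring

def treeRoute (x e : List α) (i : ℕ) : List α :=
  if i ≤ x.length - cpl x e then x.take (x.length - i)
  else e.take (cpl x e + (i - (x.length - cpl x e)))

def treeRouteHops (x e : List α) : ℕ :=
  (x.length - cpl x e) + (e.length - cpl x e)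

variable (x e : List α)

lemma natCast_treeRouteHops : (treeRouteHops x e : ℤ) = deltaTD x e := by
  have := cpl_le_length_left x e
  have := cpl_le_length_right_s14 x e
  rw [treeRouteHops, deltaTD]
  omega

lemma treeRoute_of_le {i : ℕ} (hi : i ≤ x.length - cpl x e) :
    treeRoute x e i = x.take (x.length - i) :=
  if_pos hi

lemma treeRoute_of_ge {i : ℕ} (hi : x.length - cpl x e ≤ i) :
    treeRoute x e i = e.take (cpl x e + (i - (x.length - cpl x e))) := by
  rcases hi.eq_or_lt with rfl | hi
  · rw [treeRoute_of_le x e le_rfl, Nat.sub_sub_self (cpl_le_length_left x e), Nat.sub_self,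
      Nat.add_zero, take_cpl_eq]
  · exact if_neg hi.not_ge

lemma treeRoute_zero : treeRoute x e 0 = x := by
  simp [treeRoute_of_le x e (Nat.zero_le _)]

lemma treeRoute_treeRouteHops : treeRoute x e (treeRouteHops x e) = e := by
  have := cpl_le_length_right_s14 x e
  rw [treeRoute_of_ge x e (by simp [treeRouteHops]), treeRouteHops, Nat.add_sub_cancel_left,
    Nat.add_sub_cancel' this, List.take_length]

lemma treeRoute_prefix (i : ℕ) : treeRoute x e i <+: x ∨ treeRoute x e i <+: e := by
  rcases le_total i (x.length - cpl x e) with hi | hi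
  · exact .inl (treeRoute_of_le x e hi ▸ List.take_prefix _ _)
  · exact .inr (treeRoute_of_ge x e hi ▸ List.take_prefix _ _)

lemma deltaTD_treeRoute {i : ℕ} (hi : i ≤ treeRouteHops x e) :
    deltaTD (treeRoute x e i) e = treeRouteHops x e - i := by
  have := cpl_le_length_left x e
  have := cpl_le_length_right_s14 x e
  rw [treeRouteHops] at hi ⊢
  rcases le_total i (x.length - cpl x e) with hle | hge
  · rw [treeRoute_of_le x e hle, deltaTD_take_of_cpl_le (by omega) (by omega)]
    omega
  · rw [treeRoute_of_ge x e hge, deltaTD_take_self (by omega)]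
    omega

lemma treeRoute_succ_parent_or_child {i : ℕ} (hi : i < treeRouteHops x e) :
    treeRoute x e (i + 1) = (treeRoute x e i).dropLast ∨
      treeRoute x e i = (treeRoute x e (i + 1)).dropLast := by
  have := cpl_le_length_right_s14 x e
  rw [treeRouteHops] at hi
  by_cases hup : i + 1 ≤ x.length - cpl x e
  · left
    rw [treeRoute_of_le x e hup, treeRoute_of_le x e (by omega),
      List.dropLast_take_of_le (by omega), Nat.sub_sub]
  · right
    rw [treeRoute_of_ge x e (by omega), treeRoute_of_ge x e (by omega),
      List.dropLast_take_of_le (by omega)]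
    congr 1
    omega

end TreeRoute

/-- In a prefix-closed finite set `S` of coordinates, for any `x, e ∈ S` there is a
sequence `x = v 0, v 1, …, v k = e` inside `S` whose consecutive members are related as
parent and child in the prefix tree, along which `δ_TD · e` strictly decreases, and whose
length is exactly `k = δ_TD x e`: greedy routing along tree edges reaches `e` from `x`
in exactly `δ_TD x e` hops, which is the length of the tree route. -/
theorem greedy_tree_route {α : Type*} [DecidableEq α] (S : Finset (List α))
    (hS : ∀ c ∈ S, ∀ p : List α, p <+: c → p ∈ S)
    (x e : List α) (hx : x ∈ S) (he : e ∈ S) :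
    ∃ (k : ℕ) (v : ℕ → List α), v 0 = x ∧ v k = e ∧
      (∀ i ≤ k, v i ∈ S) ∧
      (∀ i < k, v (i + 1) = (v i).dropLast ∨ v i = (v (i + 1)).dropLast) ∧
      (∀ i < k, deltaTD (v (i + 1)) e < deltaTD (v i) e) ∧
      (k : ℤ) = deltaTD x e := by
  refine ⟨treeRouteHops x e, treeRoute x e, treeRoute_zero x e, treeRoute_treeRouteHops x e,
    fun i _ => ?_, fun i hi => treeRoute_succ_parent_or_child x e hi, fun i hi => ?_,
    natCast_treeRouteHops x e⟩
  · exact (treeRoute_prefix x e i).elim (hS x hx _) (hS e he _)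
  · rw [deltaTD_treeRoute x e hi, deltaTD_treeRoute x e hi.le]
    omega
end
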